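/- Suppose q : ℝ → ℝ^N is a twice continuously differentiable solution of the closed-loop system ρ·q̈ + (C + U·C̃)·q̇ + K·q = 0 with the feedback U(t) = u_max·s(t)/√(1 + s(t)²), s(t) = q̇(t)ᵀC̃q̇(t). Then for every t, the derivative of t ↦ V(q(t), q̇(t)) satisfies d/dt V ≤ −u_max·s(t)²/√(1 + s(t)²) ≤ 0; in particular t ↦ V(q(t), q̇(t)) is nonincreasing. -/

import Mathlib

/-!
Differentiating `V` along the flow gives `V̇ = q̇ᵀ (ρ q̈ + K q)` (this uses the symmetry of `K`),
and the equation of motion turns this into `V̇ = -q̇ᵀ C q̇ - U s`. The first term is nonpositive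
because `C` is positive semidefinite, and the feedback is chosen with the sign of `s`, so that
`U s = u_max s² / √(1 + s²) ≥ 0`.
-/

open Matrix

noncomputable def V {N : ℕ} (ρ : ℝ) (K : Matrix (Fin N) (Fin N) ℝ)
    (q p : Fin N → ℝ) : ℝ :=
  ρ / 2 * (p ⬝ᵥ p) + 1 / 2 * (q ⬝ᵥ K.mulVec q)

theorem Matrix.IsSymm.dotProduct_mulVec_comm {n R : Type*} [Fintype n] [CommSemiring R]
    {A : Matrix n n R} (hA : A.IsSymm) (v w : n → R) :
    v ⬝ᵥ A *ᵥ w = w ⬝ᵥ A *ᵥ v := by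
  rw [dotProduct_mulVec, ← mulVec_transpose, hA.eq, dotProduct_comm]

section Derivatives

variable {𝕜 m n : Type*} [NontriviallyNormedField 𝕜] [Fintype n]
  {f g : 𝕜 → n → 𝕜} {f' g' : n → 𝕜} {t : 𝕜}

theorem HasDerivAt.dotProduct (hf : HasDerivAt f f' t) (hg : HasDerivAt g g' t) :
    HasDerivAt (fun τ => f τ ⬝ᵥ g τ) (f' ⬝ᵥ g t + f t ⬝ᵥ g') t := by
  have hfi := hasDerivAt_pi.mp hf
  have hgi := hasDerivAt_pi.mp hg
  have h := HasDerivAt.fun_sum (u := Finset.univ) fun i _ => (hfi i).fun_mul (hgi i)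
  rw [Finset.sum_add_distrib] at h
  exact h

theorem HasDerivAt.mulVec (A : Matrix m n 𝕜) (hf : HasDerivAt f f' t) :
    HasDerivAt (fun τ => A *ᵥ f τ) (A *ᵥ f') t :=
  hasDerivAt_pi.mpr fun i => HasDerivAt.fun_sum (u := Finset.univ) fun j _ =>
    ((hasDerivAt_pi.mp hf) j).const_mul (A i j)

theorem HasDerivAt.dotProduct_mulVec_self {A : Matrix n n 𝕜} (hA : A.IsSymm)
    (hf : HasDerivAt f f' t) :
    HasDerivAt (fun τ => f τ ⬝ᵥ A *ᵥ f τ) (2 * (f' ⬝ᵥ A *ᵥ f t)) t :=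
  (hf.dotProduct (hf.mulVec A)).congr_deriv <| by
    rw [hA.dotProduct_mulVec_comm (f t) f']; ring

end Derivatives

theorem hasDerivAt_V {N : ℕ} (ρ : ℝ) {K : Matrix (Fin N) (Fin N) ℝ} (hK : K.IsSymm)
    {x v : ℝ → Fin N → ℝ} {a : Fin N → ℝ} {t : ℝ}
    (hx : HasDerivAt x (v t) t) (hv : HasDerivAt v a t) :
    HasDerivAt (fun τ => V ρ K (x τ) (v τ)) (v t ⬝ᵥ (ρ • a + K *ᵥ x t)) t := by
  have hvv : HasDerivAt (fun τ => v τ ⬝ᵥ v τ) (2 * (v t ⬝ᵥ a)) t :=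
    (hv.dotProduct hv).congr_deriv <| by rw [dotProduct_comm a]; ring
  refine ((hvv.const_mul (ρ / 2)).add
    ((hx.dotProduct_mulVec_self hK).const_mul (1 / 2))).congr_deriv ?_
  simp only [dotProduct_add, dotProduct_smul, smul_eq_mul]
  ring

theorem dotProduct_eq_of_closedLoop {n R : Type*} [Fintype n] [CommRing R] {ρ u : R}
    {C Ct K : Matrix n n R} {x v a : n → R} (h : ρ • a + C *ᵥ v + u • Ct *ᵥ v + K *ᵥ x = 0) :
    v ⬝ᵥ (ρ • a + K *ᵥ x) = -(v ⬝ᵥ C *ᵥ v) - u * (v ⬝ᵥ Ct *ᵥ v) := by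
  have hforce : ρ • a + K *ᵥ x = -(C *ᵥ v) - u • Ct *ᵥ v := by
    linear_combination (norm := module) h
  rw [hforce, dotProduct_sub, dotProduct_neg, dotProduct_smul, smul_eq_mul]

theorem stmt_2_general (N : ℕ) (ρ u_max : ℝ) (hu : 0 < u_max)
    (C Ct K : Matrix (Fin N) (Fin N) ℝ)
    (hC : C.PosSemidef) (hK : K.PosDef)
    (q : ℝ → Fin N → ℝ) (hq : ContDiff ℝ 2 q)
    (U s : ℝ → ℝ)
    (hs : ∀ t, s t = deriv q t ⬝ᵥ Ct.mulVec (deriv q t))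
    (hU : ∀ t, U t = u_max * s t / Real.sqrt (1 + s t ^ 2))
    (hode : ∀ t, ρ • deriv (deriv q) t + C.mulVec (deriv q t)
        + U t • Ct.mulVec (deriv q t) + K.mulVec (q t) = 0) :
    (∀ t, deriv (fun τ => V ρ K (q τ) (deriv q τ)) t
        ≤ -u_max * s t ^ 2 / Real.sqrt (1 + s t ^ 2) ∧
      -u_max * s t ^ 2 / Real.sqrt (1 + s t ^ 2) ≤ 0) ∧
    Antitone (fun t => V ρ K (q t) (deriv q t)) := by
  have hKsymm : K.IsSymm := isHermitian_iff_isSymm.mp hK.isHermitian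
  have hV : ∀ t, HasDerivAt (fun τ => V ρ K (q τ) (deriv q τ))
      (-(deriv q t ⬝ᵥ C *ᵥ deriv q t) - U t * s t) t := fun t => by
    have h := hasDerivAt_V ρ hKsymm (hq.differentiable two_ne_zero t).hasDerivAt
      (hq.deriv'.differentiable one_ne_zero t).hasDerivAt
    rwa [dotProduct_eq_of_closedLoop (hode t), ← hs t] at h
  have hbound : ∀ t, -(deriv q t ⬝ᵥ C *ᵥ deriv q t) - U t * s t
      ≤ -u_max * s t ^ 2 / Real.sqrt (1 + s t ^ 2) := fun t => by
    have hdamp : 0 ≤ deriv q t ⬝ᵥ C *ᵥ deriv q t := by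
      simpa using hC.dotProduct_mulVec_nonneg (deriv q t)
    have hfeedback : U t * s t = u_max * s t ^ 2 / √(1 + s t ^ 2) := by rw [hU t]; ring
    rw [hfeedback, neg_mul, neg_div]
    linarith
  have hnonpos : ∀ t, -u_max * s t ^ 2 / Real.sqrt (1 + s t ^ 2) ≤ 0 := fun t =>
    div_nonpos_of_nonpos_of_nonneg (by nlinarith [sq_nonneg (s t)]) (Real.sqrt_nonneg _)
  refine ⟨fun t => ⟨(hV t).deriv ▸ hbound t, hnonpos t⟩,
    antitone_of_deriv_nonpos (fun t => (hV t).differentiableAt) fun t => ?_⟩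
  rw [(hV t).deriv]
  exact (hbound t).trans (hnonpos t)

/-- Along any C² solution of the closed-loop system
`ρ q̈ + (C + U C̃) q̇ + K q = 0` with feedback `U t = u_max s t / √(1 + s t ^ 2)`,
`s t = q̇ᵀ C̃ q̇`, the derivative of `t ↦ V(q t, q̇ t)` satisfies
`d/dt V ≤ −u_max s² / √(1 + s²) ≤ 0`; in particular `t ↦ V(q t, q̇ t)` is
nonincreasing. -/
theorem stmt_2 (N : ℕ) (hN : 1 ≤ N) (ρ u_max : ℝ) (hρ : 0 < ρ) (hu : 0 < u_max)
    (C Ct K : Matrix (Fin N) (Fin N) ℝ)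
    (hC : C.PosSemidef) (hCt : Ct.PosDef) (hK : K.PosDef)
    (q : ℝ → Fin N → ℝ) (hq : ContDiff ℝ 2 q)
    (U s : ℝ → ℝ)
    (hs : ∀ t, s t = deriv q t ⬝ᵥ Ct.mulVec (deriv q t))
    (hU : ∀ t, U t = u_max * s t / Real.sqrt (1 + s t ^ 2))
    (hode : ∀ t, ρ • deriv (deriv q) t + C.mulVec (deriv q t)
        + U t • Ct.mulVec (deriv q t) + K.mulVec (q t) = 0) :
    (∀ t, deriv (fun τ => V ρ K (q τ) (deriv q τ)) t
        ≤ -u_max * s t ^ 2 / Real.sqrt (1 + s t ^ 2) ∧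
      -u_max * s t ^ 2 / Real.sqrt (1 + s t ^ 2) ≤ 0) ∧
    Antitone (fun t => V ρ K (q t) (deriv q t)) :=
  stmt_2_general N ρ u_max hu C Ct K hC hK q hq U s hs hU hode
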